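/- (Theorem 1, Gaussian case.) Let H : Ω → ℝ be a random variable whose law is the Gaussian measure on ℝ with mean μ ∈ ℝ and variance v > 0, and let α ∈ (0,1). If CVaR_α(H) ≤ 0, then P(H ≥ 0) ≤ α and P(H ≤ 0) ≥ 1 − α. -/

import Mathlib

open MeasureTheory ProbabilityTheory
open scoped NNReal

/-!
Since `VaR_α(H) ≤ H` on the event defining `CVaR_α(H)`, and that event has positive probability
for a nondegenerate Gaussian, `VaR_α(H) ≤ CVaR_α(H) ≤ 0`. The tail `t ↦ P(H ≥ t)` is antitone
and tends to `0`, so the infimum defining `VaR_α(H)` is over a nonempty set, and continuity of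
measure from below gives `P(H > VaR_α(H)) ≤ α`. A Gaussian has no atoms, hence
`P(H ≥ 0) ≤ P(H ≥ VaR_α(H)) = P(H > VaR_α(H)) ≤ α`, and `P(H ≤ 0) ≥ 1 - P(H ≥ 0)`.
-/

/-- Value-at-risk at confidence level `α`:
`VaR_α(H) = inf { t : ℝ | P(H ≥ t) ≤ α }`. -/
noncomputable def VaR {Ω : Type*} [MeasurableSpace Ω] (P : Measure Ω) (H : Ω → ℝ) (α : ℝ) : ℝ :=
  sInf {t : ℝ | (P {ω | t ≤ H ω}).toReal ≤ α}

/-- Conditional value-at-risk: the conditional expectation of `H` given the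
event `{H ≥ VaR_α(H)}`. -/
noncomputable def CVaR {Ω : Type*} [MeasurableSpace Ω] (P : Measure Ω) (H : Ω → ℝ) (α : ℝ) : ℝ :=
  (∫ ω in {ω | VaR P H α ≤ H ω}, H ω ∂P) / (P {ω | VaR P H α ≤ H ω}).toReal

section VaR

variable {Ω : Type*} [MeasurableSpace Ω] {P : Measure Ω} [IsFiniteMeasure P] {H : Ω → ℝ}
  {α : ℝ}

lemma VaR_le_CVaR (hH : Measurable H) (hint : Integrable H P)
    (htail : P {ω | VaR P H α ≤ H ω} ≠ 0) : VaR P H α ≤ CVaR P H α := by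
  rw [CVaR, le_div_iff₀ (ENNReal.toReal_pos htail (measure_ne_top _ _))]
  exact setIntegral_ge_of_const_le_real (hH measurableSet_Ici) (measure_ne_top _ _)
    (fun _ hω => hω) hint.integrableOn

lemma nonempty_setOf_toReal_measure_le (hH : Measurable H) (hα : 0 < α) :
    {t : ℝ | (P {ω | t ≤ H ω}).toReal ≤ α}.Nonempty := by
  have hempty : ⋂ t : ℝ, {ω | t ≤ H ω} = ∅ :=
    Set.iInter_eq_empty_iff.2 fun ω => ⟨H ω + 1, fun h : H ω + 1 ≤ H ω => by linarith⟩
  have htend : Filter.Tendsto (fun t : ℝ => P {ω | t ≤ H ω}) Filter.atTop (nhds 0) := by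
    have h := tendsto_measure_iInter_atTop (μ := P) (s := fun t : ℝ => {ω | t ≤ H ω})
      (fun t => (hH measurableSet_Ici).nullMeasurableSet)
      (fun s t hst ω (hω : t ≤ H ω) => hst.trans hω) ⟨0, measure_ne_top P _⟩
    rwa [hempty, measure_empty] at h
  obtain ⟨t, ht⟩ := (htend.eventually_lt_const (ENNReal.ofReal_pos.2 hα)).exists
  exact ⟨t, ENNReal.toReal_le_of_le_ofReal hα.le ht.le⟩

lemma toReal_measure_le_of_VaR_lt (hne : {t : ℝ | (P {ω | t ≤ H ω}).toReal ≤ α}.Nonempty)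
    {t : ℝ} (ht : VaR P H α < t) : (P {ω | t ≤ H ω}).toReal ≤ α := by
  obtain ⟨s, hs, hst⟩ := exists_lt_of_csInf_lt hne ht
  exact (ENNReal.toReal_mono (measure_ne_top _ _)
    (measure_mono fun ω (hω : t ≤ H ω) => hst.le.trans hω)).trans hs

lemma measure_VaR_lt_le (hα : 0 ≤ α) (hne : {t : ℝ | (P {ω | t ≤ H ω}).toReal ≤ α}.Nonempty) :
    P {ω | VaR P H α < H ω} ≤ ENNReal.ofReal α := by
  obtain ⟨u, hu_anti, hu_gt, hu_lim⟩ := exists_seq_strictAnti_tendsto (VaR P H α)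
  have hunion : {ω | VaR P H α < H ω} = ⋃ n, {ω | u n ≤ H ω} := by
    ext ω
    simp only [Set.mem_ofPred_eq, Set.mem_iUnion]
    constructor
    · intro h
      exact (hu_lim.eventually (gt_mem_nhds h)).exists.imp fun _ hn => hn.le
    · rintro ⟨n, hn⟩
      exact (hu_gt n).trans_le hn
  have hmono : Monotone fun n => {ω | u n ≤ H ω} :=
    fun m n hmn ω (hω : u m ≤ H ω) => (hu_anti.antitone hmn).trans hω
  rw [hunion, hmono.measure_iUnion]
  exact iSup_le fun n => (ENNReal.le_ofReal_iff_toReal_le (measure_ne_top _ _) hα).2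
    (toReal_measure_le_of_VaR_lt hne (hu_gt n))

lemma toReal_measure_VaR_le_le (hatom : P {ω | H ω = VaR P H α} = 0) (hα : 0 ≤ α)
    (hne : {t : ℝ | (P {ω | t ≤ H ω}).toReal ≤ α}.Nonempty) :
    (P {ω | VaR P H α ≤ H ω}).toReal ≤ α := by
  refine ENNReal.toReal_le_of_le_ofReal hα ?_
  calc P {ω | VaR P H α ≤ H ω}
      ≤ P ({ω | VaR P H α < H ω} ∪ {ω | H ω = VaR P H α}) :=
        measure_mono fun ω (hω : VaR P H α ≤ H ω) => hω.lt_or_eq.imp id Eq.symm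
    _ ≤ P {ω | VaR P H α < H ω} + P {ω | H ω = VaR P H α} := measure_union_le _ _
    _ ≤ ENNReal.ofReal α := by rw [hatom, add_zero]; exact measure_VaR_lt_le hα hne

end VaR

lemma one_sub_toReal_measure_le_le {Ω : Type*} [MeasurableSpace Ω] (P : Measure Ω)
    [IsProbabilityMeasure P] (H : Ω → ℝ) (t : ℝ) :
    1 - (P {ω | t ≤ H ω}).toReal ≤ (P {ω | H ω ≤ t}).toReal := by
  have hcover : (Set.univ : Set Ω) = {ω | t ≤ H ω} ∪ {ω | H ω ≤ t} := by
    ext ω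
    simp [le_total]
  have h := measureReal_union_le (μ := P) {ω | t ≤ H ω} {ω | H ω ≤ t}
  rw [← hcover, probReal_univ] at h
  simp only [measureReal_def] at h
  linarith

section Gaussian

variable {Ω : Type*} [MeasurableSpace Ω] {P : Measure Ω} {H : Ω → ℝ} {μ : ℝ} {v : ℝ≥0}

lemma integrable_of_hasLaw_gaussianReal (hH : HasLaw H (gaussianReal μ v) P) :
    Integrable H P := by
  have hid : Integrable id (P.map H) := hH.map_eq ▸ (memLp_id_gaussianReal 1).integrable le_rfl
  exact (integrable_map_measure aestronglyMeasurable_id hH.aemeasurable).1 hid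

lemma measure_le_ne_zero_of_hasLaw_gaussianReal (hH : HasLaw H (gaussianReal μ v) P)
    (hv : v ≠ 0) (t : ℝ) : P {ω | t ≤ H ω} ≠ 0 := by
  rw [hH.measure_eq (p := (t ≤ ·)) measurableSet_Ici]
  intro h
  have hvol : volume (Set.Ici t) = 0 := gaussianReal_absolutelyContinuous' μ hv h
  simp at hvol

lemma measure_eq_zero_of_hasLaw_gaussianReal (hH : HasLaw H (gaussianReal μ v) P)
    (hv : v ≠ 0) (t : ℝ) : P {ω | H ω = t} = 0 := by
  rw [hH.measure_eq (p := (· = t)) (measurableSet_singleton t)]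
  exact gaussianReal_absolutelyContinuous μ hv Real.volume_singleton

end Gaussian

/-- Theorem 1, Gaussian case: for a Gaussian random variable `H` with mean `μ`
and variance `v > 0`, `CVaR_α(H) ≤ 0` implies `P(H ≥ 0) ≤ α` and `P(H ≤ 0) ≥ 1 − α`. -/
theorem cvar_nonpos_imp_safety_gaussian
    {Ω : Type*} [MeasurableSpace Ω] (P : Measure Ω) [IsProbabilityMeasure P]
    (H : Ω → ℝ) (hmeas : Measurable H) (μ : ℝ) (v : ℝ≥0) (hv : 0 < v)
    (hlaw : P.map H = gaussianReal μ v)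
    (α : ℝ) (hα : α ∈ Set.Ioo (0 : ℝ) 1)
    (hcvar : CVaR P H α ≤ 0) :
    (P {ω | 0 ≤ H ω}).toReal ≤ α ∧ 1 - α ≤ (P {ω | H ω ≤ 0}).toReal := by
  have hH : HasLaw H (gaussianReal μ v) P := ⟨hmeas.aemeasurable, hlaw⟩
  have hVaR : VaR P H α ≤ 0 :=
    (VaR_le_CVaR hmeas (integrable_of_hasLaw_gaussianReal hH)
      (measure_le_ne_zero_of_hasLaw_gaussianReal hH hv.ne' _)).trans hcvar
  have htail : (P {ω | VaR P H α ≤ H ω}).toReal ≤ α :=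
    toReal_measure_VaR_le_le (measure_eq_zero_of_hasLaw_gaussianReal hH hv.ne' _) hα.1.le
      (nonempty_setOf_toReal_measure_le hmeas hα.1)
  have hzero : (P {ω | 0 ≤ H ω}).toReal ≤ α :=
    (ENNReal.toReal_mono (measure_ne_top _ _)
      (measure_mono fun ω (hω : 0 ≤ H ω) => hVaR.trans hω)).trans htail
  exact ⟨hzero, by linarith [one_sub_toReal_measure_le_le P H 0]⟩
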